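/- arXiv:1611.06870 — 3 statements merged into one kernel-verified Lean document; each statement's English description precedes it below -/
import Mathlib

section
/- Napoleon's theorem: Given any triangle ABC in the plane, if equilateral triangles are erected externally on each of its three sides, then the centroids of these three equilateral triangles form an equilateral triangle. -/
/-!
Write `ζ = exp(-πi/3)`, so that the centroid of the equilateral triangle erected on `XY` is
`(2X + Y + (Y - X) ζ) / 3`. Since `ζ² = ζ - 1`, a direct computation shows that the sides
`N₁ - N₂`, `N₂ - N₃`, `N₃ - N₁` of the Napoleon triangle are obtained from one another by the
rotation `ζ² = exp(-2πi/3)`, hence have equal lengths.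
-/

open Complex

namespace Napoleon

noncomputable def centroid (ζ X Y : ℂ) : ℂ := (X + Y + (X + (Y - X) * ζ)) / 3

theorem centroid_sub_centroid (ζ A B C : ℂ) (hζ : ζ ^ 2 = ζ - 1) :
    centroid ζ A B - centroid ζ B C = ζ ^ 2 * (centroid ζ B C - centroid ζ C A) := by
  unfold centroid
  linear_combination (((A + B - 2 * C) * ζ + (2 * A - B - C)) / 3) * hζ

theorem dist_eq_dist_of_sub_eq_mul {a b c d w : ℂ} (hw : ‖w‖ = 1) (h : a - b = w * (c - d)) :
    dist a b = dist c d := by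
  rw [dist_eq, dist_eq, h, norm_mul, hw, one_mul]

theorem dist_centroid_eq (ζ A B C : ℂ) (hζ : ζ ^ 2 = ζ - 1) (hζ_norm : ‖ζ‖ = 1) :
    dist (centroid ζ A B) (centroid ζ B C) = dist (centroid ζ B C) (centroid ζ C A) :=
  dist_eq_dist_of_sub_eq_mul (by rw [norm_pow, hζ_norm, one_pow])
    (centroid_sub_centroid ζ A B C hζ)

theorem exp_neg_pi_I_div_three_eq_exp_ofReal_mul_I :
    exp (-(Real.pi : ℂ) * I / 3) = exp (((-(Real.pi / 3) : ℝ) : ℂ) * I) := by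
  congr 1
  push_cast
  ring

theorem norm_exp_neg_pi_I_div_three : ‖exp (-(Real.pi : ℂ) * I / 3)‖ = 1 := by
  rw [exp_neg_pi_I_div_three_eq_exp_ofReal_mul_I, norm_exp_ofReal_mul_I]

theorem exp_neg_pi_I_div_three_sq :
    exp (-(Real.pi : ℂ) * I / 3) ^ 2 = exp (-(Real.pi : ℂ) * I / 3) - 1 := by
  rw [exp_neg_pi_I_div_three_eq_exp_ofReal_mul_I, exp_mul_I, ← ofReal_cos, ← ofReal_sin,
    Real.cos_neg, Real.sin_neg, Real.cos_pi_div_three, Real.sin_pi_div_three]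
  have h3 : ((Real.sqrt 3 : ℝ) : ℂ) ^ 2 = 3 := by
    rw [← ofReal_pow, Real.sq_sqrt (by norm_num : (0 : ℝ) ≤ 3)]
    norm_num
  push_cast
  ring_nf
  rw [I_sq, h3]
  ring

end Napoleon

open Napoleon in
theorem napoleon_general (A B C : ℂ)
    (N₁ N₂ N₃ : ℂ)
    (hN₁ : N₁ = (A + B + (A + (B - A) * Complex.exp (-(Real.pi : ℂ) * Complex.I / 3))) / 3)
    (hN₂ : N₂ = (B + C + (B + (C - B) * Complex.exp (-(Real.pi : ℂ) * Complex.I / 3))) / 3)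
    (hN₃ : N₃ = (C + A + (C + (A - C) * Complex.exp (-(Real.pi : ℂ) * Complex.I / 3))) / 3) :
    dist N₁ N₂ = dist N₂ N₃ ∧ dist N₂ N₃ = dist N₃ N₁ := by
  have key := fun X Y Z ↦
    dist_centroid_eq _ X Y Z exp_neg_pi_I_div_three_sq norm_exp_neg_pi_I_div_three
  exact ⟨by simpa only [centroid, hN₁, hN₂, hN₃] using key A B C,
    by simpa only [centroid, hN₁, hN₂, hN₃] using key B C A⟩

/-- Napoleon's theorem: the centroids of the equilateral triangles erected
externally on the sides of any triangle `ABC` form an equilateral triangle.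
For a positively oriented triangle, the external apex on side `XY` is
`X + (Y - X) * exp(-π i / 3)`. -/
theorem napoleon (A B C : ℂ)
    (hor : 0 ≤ ((starRingEnd ℂ) (B - A) * (C - A)).im)
    (N₁ N₂ N₃ : ℂ)
    (hN₁ : N₁ = (A + B + (A + (B - A) * Complex.exp (-(Real.pi : ℂ) * Complex.I / 3))) / 3)
    (hN₂ : N₂ = (B + C + (B + (C - B) * Complex.exp (-(Real.pi : ℂ) * Complex.I / 3))) / 3)
    (hN₃ : N₃ = (C + A + (C + (A - C) * Complex.exp (-(Real.pi : ℂ) * Complex.I / 3))) / 3) :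
    dist N₁ N₂ = dist N₂ N₃ ∧ dist N₂ N₃ = dist N₃ N₁ :=
  napoleon_general A B C N₁ N₂ N₃ hN₁ hN₂ hN₃
end

section
/- The squared side length of the Napoleon triangle: For a triangle ABC with side lengths a = |BC|, b = |CA|, c = |AB| and area S, the common side length s of the equilateral triangle formed by the centroids of externally erected equilateral triangles satisfies 3·s² = (a² + b² + c²)/2 + 2√3·S. -/
/-! With `u = B - A`, `v = C - A` and `ω = exp (-πi/3) = 1/2 - (√3/2) i`, the centroids satisfy
`3 (N₁ - N₂) = -(u + v) + (2u - v) ω`. Since `|ω| = 1`, expanding `|z + w ω|²` leaves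
`|z|² + |w|² + Re (z̄ w) + √3 Im (z̄ w)`; here `Im (z̄ w) = 3 Im (ū v) = 6 S`, and the real
parts recombine into `(3/2) (a² + b² + c²)`. -/

open Complex ComplexConjugate

lemma exp_neg_pi_div_three_mul_I :
    exp (-(Real.pi : ℂ) * I / 3) = 1 / 2 - ((Real.sqrt 3 / 2 : ℝ) : ℂ) * I := by
  have h : -(Real.pi : ℂ) * I / 3 = ((-(Real.pi / 3) : ℝ) : ℂ) * I := by push_cast; ring
  rw [h, exp_mul_I, ← ofReal_cos, ← ofReal_sin, Real.cos_neg, Real.sin_neg,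
    Real.cos_pi_div_three, Real.sin_pi_div_three]
  push_cast
  ring

lemma normSq_add_mul_exp_neg_pi_div_three_mul_I (z w : ℂ) :
    normSq (z + w * exp (-(Real.pi : ℂ) * I / 3)) =
      normSq z + normSq w + (conj z * w).re + Real.sqrt 3 * (conj z * w).im := by
  have h3 : Real.sqrt 3 ^ 2 = 3 := Real.sq_sqrt (by norm_num)
  rw [exp_neg_pi_div_three_mul_I]
  simp only [normSq_apply, add_re, add_im, sub_re, sub_im, mul_re, mul_im, conj_re, conj_im,
    I_re, I_im, ofReal_re, ofReal_im, div_ofNat_re, div_ofNat_im, one_re, one_im]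
  linear_combination (w.re ^ 2 + w.im ^ 2) / 4 * h3

theorem napoleon_side_sq_general (A B C : ℂ) (a b c S s : ℝ)
    (ha : a = dist B C) (hb : b = dist C A) (hc : c = dist A B)
    (hS : S = (1 / 2) * ((starRingEnd ℂ) (B - A) * (C - A)).im)
    (N₁ N₂ : ℂ)
    (hN₁ : N₁ = (A + B + (A + (B - A) * Complex.exp (-(Real.pi : ℂ) * Complex.I / 3))) / 3)
    (hN₂ : N₂ = (B + C + (B + (C - B) * Complex.exp (-(Real.pi : ℂ) * Complex.I / 3))) / 3)
    (hs : s = dist N₁ N₂) :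
    3 * s ^ 2 = (a ^ 2 + b ^ 2 + c ^ 2) / 2 + 2 * Real.sqrt 3 * S := by
  have hN : 3 * (N₁ - N₂) =
      -((B - A) + (C - A)) + (2 * (B - A) - (C - A)) * exp (-(Real.pi : ℂ) * I / 3) := by
    rw [hN₁, hN₂]; ring
  have h9 : 9 * s ^ 2 = normSq (3 * (N₁ - N₂)) := by
    rw [hs, dist_eq, ← normSq_eq_norm_sq, normSq_mul]; norm_num
  rw [hN, normSq_add_mul_exp_neg_pi_div_three_mul_I] at h9
  rw [ha, hb, hc, hS, dist_eq, dist_eq, dist_eq, ← normSq_eq_norm_sq, ← normSq_eq_norm_sq,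
    ← normSq_eq_norm_sq]
  simp only [normSq_apply, add_re, add_im, sub_re, sub_im, mul_re, mul_im, conj_re, conj_im,
    neg_re, neg_im, re_ofNat, im_ofNat] at h9 ⊢
  linear_combination h9 / 3

/-- The squared side length of the Napoleon triangle: for a (positively
oriented) triangle `ABC` with side lengths `a, b, c` and area `S`, the common
side length `s` of the Napoleon triangle satisfies
`3 s² = (a² + b² + c²)/2 + 2√3 S`. -/
theorem napoleon_side_sq (A B C : ℂ) (a b c S s : ℝ)
    (ha : a = dist B C) (hb : b = dist C A) (hc : c = dist A B)
    (hS : S = (1 / 2) * ((starRingEnd ℂ) (B - A) * (C - A)).im)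
    (hS0 : 0 ≤ S)
    (N₁ N₂ : ℂ)
    (hN₁ : N₁ = (A + B + (A + (B - A) * Complex.exp (-(Real.pi : ℂ) * Complex.I / 3))) / 3)
    (hN₂ : N₂ = (B + C + (B + (C - B) * Complex.exp (-(Real.pi : ℂ) * Complex.I / 3))) / 3)
    (hs : s = dist N₁ N₂) :
    3 * s ^ 2 = (a ^ 2 + b ^ 2 + c ^ 2) / 2 + 2 * Real.sqrt 3 * S :=
  napoleon_side_sq_general A B C a b c S s ha hb hc hS N₁ N₂ hN₁ hN₂ hs
end

section
/- Let P be a regular n-gon (n ≥ 3) with side length x, and erect a regular n-gon externally on each side of P. Then the centers of the n erected polygons form a regular n-gon with the same center as P: they lie on a circle of radius R' = a_P + a_Q, where a_P = (x/2)·cot(π/n) is the apothem of P and a_Q = (x/2)·cot(π/n) is the apothem of each erected polygon, so R' = x·cot(π/n); consecutive centers are separated by angle 2π/n, so the side length is 2·x·cot(π/n)·sin(π/n) = 2x·cos(π/n). -/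
open Complex Finset

lemma exp_two_pi_mod (n : ℕ) (hn : n ≠ 0) (m : ℕ) :
    Complex.exp (2 * (Real.pi : ℂ) * Complex.I * ((m % n : ℕ) : ℂ) / n) =
      Complex.exp (2 * (Real.pi : ℂ) * Complex.I * (m : ℂ) / n) := by
  have hnC : (n : ℂ) ≠ 0 := Nat.cast_ne_zero.mpr hn
  have hc : ((m : ℕ) : ℂ) = (n : ℂ) * ((m / n : ℕ) : ℂ) + ((m % n : ℕ) : ℂ) := by
    exact_mod_cast congrArg (Nat.cast : ℕ → ℂ) (Nat.div_add_mod m n).symm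
  have he : 2 * (Real.pi : ℂ) * Complex.I * (m : ℂ) / n =
      ((m / n : ℕ) : ℂ) * (2 * Real.pi * Complex.I) +
      2 * (Real.pi : ℂ) * Complex.I * ((m % n : ℕ) : ℂ) / n := by
    field_simp
    linear_combination hc
  rw [he, Complex.exp_add, Complex.exp_nat_mul_two_pi_mul_I, one_mul]

lemma exp_pi_mod (n : ℕ) (hn : n ≠ 0) (m : ℕ) :
    Complex.exp ((Real.pi : ℂ) * Complex.I * (2 * ((m % n : ℕ) : ℂ) + 1) / n) =
      Complex.exp ((Real.pi : ℂ) * Complex.I * (2 * (m : ℂ) + 1) / n) := by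
  have hnC : (n : ℂ) ≠ 0 := Nat.cast_ne_zero.mpr hn
  have hc : ((m : ℕ) : ℂ) = (n : ℂ) * ((m / n : ℕ) : ℂ) + ((m % n : ℕ) : ℂ) := by
    exact_mod_cast congrArg (Nat.cast : ℕ → ℂ) (Nat.div_add_mod m n).symm
  have he : (Real.pi : ℂ) * Complex.I * (2 * (m : ℂ) + 1) / n =
      ((m / n : ℕ) : ℂ) * (2 * Real.pi * Complex.I) +
      (Real.pi : ℂ) * Complex.I * (2 * ((m % n : ℕ) : ℂ) + 1) / n := by
    field_simp
    linear_combination 2 * hc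
  rw [he, Complex.exp_add, Complex.exp_nat_mul_two_pi_mul_I, one_mul]

/-- General `n`-gon version of Napoleon's construction: for a regular `n`-gon
with side length `x` centered at the origin, the centers of the regular
`n`-gons erected externally on its sides are the points
`x·cot(π/n)·e^{iπ(2k+1)/n}`, hence form a regular `n`-gon with the same
center and side length `2x·cos(π/n)`. -/
theorem napoleon_ngon (n : ℕ) [NeZero n] (hn : 3 ≤ n) (x R : ℝ) (hx : 0 < x)
    (hR : R = x / (2 * Real.sin (Real.pi / n)))
    (A B : Fin n → ℂ)
    (hA : ∀ k : Fin n, A k = (R : ℂ) * Complex.exp (2 * (Real.pi : ℂ) * Complex.I * (k : ℕ) / n))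
    (hB : ∀ k : Fin n, B k = (A k + A (k + 1)) / 2 +
      ((1 / 2) * (Real.cos (Real.pi / n) / Real.sin (Real.pi / n)) : ℝ) * (-Complex.I) *
        (A (k + 1) - A k)) :
    (∀ k : Fin n, B k = ((x * (Real.cos (Real.pi / n) / Real.sin (Real.pi / n)) : ℝ) : ℂ) *
        Complex.exp ((Real.pi : ℂ) * Complex.I * (2 * (k : ℕ) + 1) / n)) ∧
      ∀ k : Fin n, dist (B k) (B (k + 1)) = 2 * x * Real.cos (Real.pi / n) := by
  have hn0 : (n : ℝ) ≠ 0 := Nat.cast_ne_zero.mpr (NeZero.ne n)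
  have hnC : (n : ℂ) ≠ 0 := Nat.cast_ne_zero.mpr (NeZero.ne n)
  have hθpos : 0 < Real.pi / n := div_pos Real.pi_pos (by positivity)
  have hθlt : Real.pi / n < Real.pi / 2 := by
    apply div_lt_div_of_pos_left Real.pi_pos (by norm_num)
    exact_mod_cast by omega
  have hsin : 0 < Real.sin (Real.pi / n) :=
    Real.sin_pos_of_pos_of_lt_pi hθpos (lt_trans hθlt (by linarith [Real.pi_pos]))
  have hcos : 0 < Real.cos (Real.pi / n) :=
    Real.cos_pos_of_mem_Ioo ⟨by linarith, hθlt⟩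
  have key : ∀ k : Fin n, B k = ((x * (Real.cos (Real.pi / n) / Real.sin (Real.pi / n)) : ℝ) : ℂ) *
      Complex.exp ((Real.pi : ℂ) * Complex.I * (2 * (k : ℕ) + 1) / n) := by
    intro k
    have hv : ((k + 1 : Fin n) : ℕ) = ((k : ℕ) + 1) % n := by simp [Fin.add_def]
    have hmod := exp_two_pi_mod n (NeZero.ne n) ((k : ℕ) + 1)
    push_cast at hmod
    have hk1 : A (k + 1) =
        (R : ℂ) * Complex.exp (2 * (Real.pi : ℂ) * Complex.I * ((k : ℕ) + 1) / n) := by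
      rw [hA (k + 1), hv, hmod]
    rw [hB k, hA k, hk1]
    set E : ℂ := Complex.exp ((Real.pi : ℂ) * Complex.I * (2 * (k : ℕ) + 1) / n) with hE
    have h1 : Complex.exp (2 * (Real.pi : ℂ) * Complex.I * (k : ℕ) / n) =
        E * Complex.exp (((-(Real.pi / n) : ℝ) : ℂ) * Complex.I) := by
      rw [hE, ← Complex.exp_add]
      congr 1
      push_cast
      field_simp
      ring
    have h2 : Complex.exp (2 * (Real.pi : ℂ) * Complex.I * ((k : ℕ) + 1) / n) =
        E * Complex.exp ((((Real.pi / n) : ℝ) : ℂ) * Complex.I) := by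
      rw [hE, ← Complex.exp_add]
      congr 1
      push_cast
      field_simp
      ring
    rw [h1, h2, Complex.exp_mul_I, Complex.exp_mul_I,
      ← Complex.ofReal_cos, ← Complex.ofReal_sin, ← Complex.ofReal_cos, ← Complex.ofReal_sin,
      Real.cos_neg, Real.sin_neg]
    have hRx : (R : ℂ) = (x : ℂ) / (2 * ((Real.sin (Real.pi / n) : ℝ) : ℂ)) := by
      rw [hR]; push_cast; ring
    rw [hRx]
    have hsC : ((Real.sin (Real.pi / n) : ℝ) : ℂ) ≠ 0 := by exact_mod_cast ne_of_gt hsin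
    have hs' : Complex.sin (((Real.pi / n : ℝ)) : ℂ) ≠ 0 := by
      rw [← Complex.ofReal_sin]; exact_mod_cast ne_of_gt hsin
    push_cast at hs' ⊢
    field_simp [hs']
    ring_nf
    simp only [Complex.I_sq]
    ring_nf
  refine ⟨key, ?_⟩
  intro k
  rw [dist_eq, key k, key (k + 1)]
  have hv : ((k + 1 : Fin n) : ℕ) = ((k : ℕ) + 1) % n := by simp [Fin.add_def]
  have hmod := exp_pi_mod n (NeZero.ne n) ((k : ℕ) + 1)
  push_cast at hmod
  rw [hv, hmod]
  set c : ℝ := x * (Real.cos (Real.pi / n) / Real.sin (Real.pi / n)) with hc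
  set E2 : ℂ := Complex.exp ((Real.pi : ℂ) * Complex.I * (2 * (k : ℕ) + 2) / n) with hE2
  have hA1 : Complex.exp ((Real.pi : ℂ) * Complex.I * (2 * (k : ℕ) + 1) / n) =
      E2 * Complex.exp (((-(Real.pi / n) : ℝ) : ℂ) * Complex.I) := by
    rw [hE2, ← Complex.exp_add]
    congr 1
    push_cast
    field_simp
    ring
  have hA2 : Complex.exp ((Real.pi : ℂ) * Complex.I * (2 * ((k : ℕ) + 1 : ℂ) + 1) / n) =
      E2 * Complex.exp ((((Real.pi / n) : ℝ) : ℂ) * Complex.I) := by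
    rw [hE2, ← Complex.exp_add]
    congr 1
    push_cast
    field_simp
  rw [hA1, hA2]
  have hfac : (c : ℂ) * (E2 * Complex.exp (((-(Real.pi / n) : ℝ) : ℂ) * Complex.I)) -
      (c : ℂ) * (E2 * Complex.exp ((((Real.pi / n) : ℝ) : ℂ) * Complex.I)) =
      (c : ℂ) * E2 * (Complex.exp (((-(Real.pi / n) : ℝ) : ℂ) * Complex.I) -
        Complex.exp ((((Real.pi / n) : ℝ) : ℂ) * Complex.I)) := by ring
  rw [hfac, norm_mul, norm_mul]
  have habs1 : ‖E2‖ = 1 := by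
    rw [hE2, Complex.norm_exp]
    norm_num [Complex.div_re, Complex.mul_re, Complex.mul_im]
  have habs2 : Complex.exp (((-(Real.pi / n) : ℝ) : ℂ) * Complex.I) -
      Complex.exp ((((Real.pi / n) : ℝ) : ℂ) * Complex.I) =
      ((-(2 * Real.sin (Real.pi / n)) : ℝ) : ℂ) * Complex.I := by
    rw [Complex.exp_mul_I, Complex.exp_mul_I, ← Complex.ofReal_cos, ← Complex.ofReal_sin,
      ← Complex.ofReal_cos, ← Complex.ofReal_sin, Real.cos_neg, Real.sin_neg]
    push_cast
    ring
  rw [habs2, habs1, norm_mul, Complex.norm_I, Complex.norm_real, Complex.norm_real, Real.norm_eq_abs, Real.norm_eq_abs]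
  rw [abs_of_pos (by positivity : 0 < c), abs_neg, abs_of_pos (by positivity)]
  rw [hc]
  field_simp
end
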